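/- arXiv:math/0011030 — 7 statements merged into one kernel-verified Lean document; each statement's English description precedes it below -/
import Mathlib

section
/- Let X be a complex Banach space with dim X ≥ 2. A nonzero operator A ∈ B(X) has rank one if and only if for every T ∈ B(X), 0 belongs to the point spectrum of TA and the point spectrum of TA has at most two elements. -/
open ContinuousLinearMap

/-- Point spectrum of a continuous linear operator. -/
def pointSpectrum {X : Type*} [NormedAddCommGroup X] [NormedSpace ℂ X]
    (A : X →L[ℂ] X) : Set ℂ :=
  {μ : ℂ | ∃ x : X, x ≠ 0 ∧ A x = μ • x}

/-!
If `A` has rank one, every `T A` has rank at most one. Since `dim X ≥ 2`, `T A` is not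
injective, so `0` is an eigenvalue; and an eigenvector for a nonzero eigenvalue lies in the
range of `T A`, hence spans it, which forces all nonzero eigenvalues to coincide.

Conversely, if the range of `A ≠ 0` contains independent vectors `A u₁, A u₂`, Hahn–Banach
gives continuous functionals biorthogonal to them, and with these one builds `T` for which
`0, 1, 2` are all eigenvalues of `T A`.
-/

section LinearAlgebra

variable {K V : Type*} [Field K] [AddCommGroup V] [Module K V]

theorem Submodule.mem_span_singleton_of_rank_le_one {s : Submodule K V}
    (hs : Module.rank K s ≤ 1) {x y : V} (hx : x ∈ s) (hx0 : x ≠ 0) (hy : y ∈ s) :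
    y ∈ K ∙ x := by
  obtain ⟨v₀, -, hsv₀⟩ := (rank_submodule_le_one_iff s).1 hs
  obtain ⟨a, rfl⟩ := mem_span_singleton.1 (hsv₀ hx)
  have ha : a ≠ 0 := left_ne_zero_of_smul hx0
  refine mem_span_singleton_trans (hsv₀ hy) (mem_span_singleton.2 ⟨a⁻¹, ?_⟩)
  rw [smul_smul, inv_mul_cancel₀ ha, one_smul]

namespace LinearMap

variable {B : V →ₗ[K] V}

theorem mem_range_of_apply_eq_smul {x : V} {μ : K} (hμ : μ ≠ 0) (hx : B x = μ • x) :
    x ∈ range B :=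
  ⟨μ⁻¹ • x, by rw [map_smul, hx, smul_smul, inv_mul_cancel₀ hμ, one_smul]⟩

theorem eq_of_apply_eq_smul_of_rank_range_le_one (hB : Module.rank K (range B) ≤ 1)
    {x y : V} {μ ν : K} (hx0 : x ≠ 0) (hy0 : y ≠ 0) (hμ : μ ≠ 0) (hν : ν ≠ 0)
    (hx : B x = μ • x) (hy : B y = ν • y) : μ = ν := by
  obtain ⟨c, rfl⟩ := Submodule.mem_span_singleton.1 <|
    Submodule.mem_span_singleton_of_rank_le_one hB (mem_range_of_apply_eq_smul hμ hx) hx0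
      (mem_range_of_apply_eq_smul hν hy)
  have : ν • c • x = μ • c • x := by rw [← hy, map_smul, hx, smul_comm]
  exact (smul_left_injective K hy0 this).symm

theorem exists_linearIndependent_pair_apply_of_one_lt_rank_range {W : Type*}
    [AddCommGroup W] [Module K W] {A : V →ₗ[K] W} (hA : 1 < Module.rank K (range A)) :
    ∃ u₁ u₂ : V, LinearIndependent K ![A u₁, A u₂] := by
  obtain ⟨⟨_, u₁, rfl⟩, hu₁⟩ := rank_pos_iff_exists_ne_zero.1 (zero_lt_one.trans hA)
  obtain ⟨⟨_, u₂, rfl⟩, hu⟩ := exists_linearIndependent_pair_of_one_lt_rank hA hu₁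
  exact ⟨u₁, u₂, LinearIndependent.pair_iff.2 fun s t hst =>
    LinearIndependent.pair_iff.1 hu s t (Subtype.ext hst)⟩

end LinearMap

end LinearAlgebra

theorem Set.encard_le_two_of_subsingleton_sdiff_singleton {α : Type*} {s : Set α} {a : α}
    (hs : (s \ {a}).Subsingleton) : s.encard ≤ 2 :=
  calc s.encard ≤ (s \ {a}).encard + ({a} : Set α).encard := encard_le_encard_sdiff_add_encard _ _
    _ ≤ 1 + 1 := by gcongr; exacts [encard_le_one_iff_subsingleton.2 hs, (encard_singleton a).le]
    _ = 2 := by norm_num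

theorem SeparatingDual.exists_dual_biorthogonal {R V : Type*} [Field R] [AddCommGroup V]
    [TopologicalSpace R] [TopologicalSpace V] [IsTopologicalRing R] [Module R V]
    [SeparatingDual R V] {ι : Type*} [Fintype ι] [DecidableEq ι] {v : ι → V}
    (hv : LinearIndependent R v) :
    ∃ f : ι → StrongDual R V, ∀ i j, f i (v j) = if i = j then 1 else 0 := by
  have hsurj := (dualMap_surjective_iff (f := Fintype.linearCombination R v)).2
    (linearIndependent_iff_injective_fintypeLinearCombination.1 hv)
  choose f hf using fun i => hsurj (LinearMap.proj i)
  refine ⟨f, fun i j => ?_⟩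
  have := congrArg (fun g : Module.Dual R (ι → R) => g (Pi.single j 1)) (hf i)
  simpa [Fintype.linearCombination_apply_single, Pi.single_apply, eq_comm] using this

section PointSpectrum

variable {X : Type*} [NormedAddCommGroup X] [NormedSpace ℂ X]

theorem zero_mem_pointSpectrum_iff {B : X →L[ℂ] X} :
    (0 : ℂ) ∈ pointSpectrum B ↔ ¬ Function.Injective B := by
  simp [pointSpectrum, injective_iff_map_eq_zero, not_forall, and_comm]

theorem zero_mem_pointSpectrum_of_rank_range_lt {B : X →L[ℂ] X}
    (hB : Module.rank ℂ (LinearMap.range (B : X →ₗ[ℂ] X)) < Module.rank ℂ X) :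
    (0 : ℂ) ∈ pointSpectrum B :=
  zero_mem_pointSpectrum_iff.2 fun hinj =>
    hB.ne (rank_range_of_injective (B : X →ₗ[ℂ] X) hinj)

theorem encard_pointSpectrum_le_two_of_rank_range_le_one {B : X →L[ℂ] X}
    (hB : Module.rank ℂ (LinearMap.range (B : X →ₗ[ℂ] X)) ≤ 1) :
    (pointSpectrum B).encard ≤ 2 :=
  Set.encard_le_two_of_subsingleton_sdiff_singleton (a := 0)
    fun _ ⟨⟨_, hx0, hx⟩, hμ⟩ _ ⟨⟨_, hy0, hy⟩, hν⟩ =>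
      LinearMap.eq_of_apply_eq_smul_of_rank_range_le_one hB hx0 hy0 hμ hν hx hy

/-- The witness is `T = f₀ ⊗ u₁ + 2 f₁ ⊗ u₂` for functionals `f₀, f₁` biorthogonal to
`A u₁, A u₂`, so that `T (A u₁) = u₁` and `T (A u₂) = 2 • u₂`. -/
theorem exists_one_two_mem_pointSpectrum_comp {A : X →L[ℂ] X} {u₁ u₂ : X}
    (hu : LinearIndependent ℂ ![A u₁, A u₂]) :
    ∃ T : X →L[ℂ] X, (1 : ℂ) ∈ pointSpectrum (T.comp A) ∧ (2 : ℂ) ∈ pointSpectrum (T.comp A) := by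
  obtain ⟨f, hf⟩ := SeparatingDual.exists_dual_biorthogonal hu
  refine ⟨(f 0).smulRight u₁ + (2 : ℂ) • (f 1).smulRight u₂,
    ⟨u₁, fun h => hu.ne_zero 0 (by simp [h]), ?_⟩, ⟨u₂, fun h => hu.ne_zero 1 (by simp [h]), ?_⟩⟩
  · have h₀₀ : f 0 (A u₁) = 1 := by simpa using hf 0 0
    have h₁₀ : f 1 (A u₁) = 0 := by simpa using hf 1 0
    simp [h₀₀, h₁₀]
  · have h₀₁ : f 0 (A u₂) = 0 := by simpa using hf 0 1
    have h₁₁ : f 1 (A u₂) = 1 := by simpa using hf 1 1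
    simp [h₀₁, h₁₁]

end PointSpectrum

theorem stmt2_general {X : Type*} [NormedAddCommGroup X] [NormedSpace ℂ X]
    (hdim : 2 ≤ Module.rank ℂ X)
    (A : X →L[ℂ] X) (hA : A ≠ 0) :
    Module.rank ℂ (LinearMap.range (A : X →ₗ[ℂ] X)) = 1 ↔
      ∀ T : X →L[ℂ] X,
        (0 : ℂ) ∈ pointSpectrum (T.comp A) ∧
        (pointSpectrum (T.comp A)).encard ≤ 2 := by
  constructor
  · intro hA₁ T
    have hTA : Module.rank ℂ (LinearMap.range (T.comp A : X →ₗ[ℂ] X)) ≤ 1 := by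
      rw [toLinearMap_comp, LinearMap.range_comp]
      exact (rank_map_le _ _).trans hA₁.le
    have hlt : Module.rank ℂ (LinearMap.range (T.comp A : X →ₗ[ℂ] X)) < Module.rank ℂ X :=
      hTA.trans_lt ((by norm_num : (1 : Cardinal) < 2).trans_le hdim)
    exact ⟨zero_mem_pointSpectrum_of_rank_range_lt hlt,
      encard_pointSpectrum_le_two_of_rank_range_le_one hTA⟩
  · intro h
    by_contra hA₁
    have hpos : 0 < Module.rank ℂ (LinearMap.range (A : X →ₗ[ℂ] X)) := by
      rw [rank_pos_iff_nontrivial, Submodule.nontrivial_iff_ne_bot, Ne, LinearMap.range_eq_bot]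
      exact coe_injective.ne hA
    have hgt : 1 < Module.rank ℂ (LinearMap.range (A : X →ₗ[ℂ] X)) :=
      lt_of_le_of_ne (Cardinal.one_le_iff_pos.2 hpos) (Ne.symm hA₁)
    obtain ⟨u₁, u₂, hu⟩ := LinearMap.exists_linearIndependent_pair_apply_of_one_lt_rank_range hgt
    obtain ⟨T, h₁, h₂⟩ := exists_one_two_mem_pointSpectrum_comp hu
    obtain ⟨h₀, hcard⟩ := h T
    have hsub : ({0, 1, 2} : Set ℂ) ⊆ pointSpectrum (T.comp A) := by
      simp only [Set.insert_subset_iff, Set.singleton_subset_iff]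
      exact ⟨h₀, h₁, h₂⟩
    have h₃ := (Set.encard_le_encard hsub).trans hcard
    rw [Set.encard_insert_of_notMem (by norm_num), Set.encard_pair (by norm_num)] at h₃
    norm_num at h₃

theorem stmt2 {X : Type*} [NormedAddCommGroup X] [NormedSpace ℂ X]
    [CompleteSpace X] (hdim : 2 ≤ Module.rank ℂ X)
    (A : X →L[ℂ] X) (hA : A ≠ 0) :
    Module.rank ℂ (LinearMap.range (A : X →ₗ[ℂ] X)) = 1 ↔
      ∀ T : X →L[ℂ] X,
        (0 : ℂ) ∈ pointSpectrum (T.comp A) ∧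
        (pointSpectrum (T.comp A)).encard ≤ 2 :=
  stmt2_general hdim A hA
end

section
/- Let X be a compact Hausdorff space and f, g ∈ C(X) continuous complex-valued functions. Then f = g if and only if for every continuous function h : X → [0,∞), the range of f·h equals the range of g·h. -/
/-!
If `f x₀ ≠ g x₀`, take a bump function `h` with values in `[0, 1]`, equal to `1` at `x₀` and
supported where `g` is `ε`-close to `g x₀`. Every value of `h • g` is then `ε`-close to the
segment `[0, g x₀]`, while `f x₀ = h x₀ • f x₀` is one of the values of `h • f`. Equality of the
ranges for all such `h` thus puts `f x₀` on the segment `[0, g x₀]`, and symmetrically `g x₀` on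
`[0, f x₀]`; two points each lying between `0` and the other coincide.
-/

open Set Metric

lemma isClosed_segment {E : Type*} [NormedAddCommGroup E] [NormedSpace ℝ E] (a b : E) :
    IsClosed (segment ℝ a b) := by
  simpa only [convexHull_pair] using (toFinite {a, b}).isClosed_convexHull (𝕜 := ℝ)

lemma CompletelyRegularSpace.exists_bump {X : Type*} [TopologicalSpace X]
    [CompletelyRegularSpace X] {x₀ : X} {U : Set X} (hU : IsOpen U) (hx₀ : x₀ ∈ U) :
    ∃ h : C(X, ℝ), (∀ x, h x ∈ Icc 0 1) ∧ h x₀ = 1 ∧ ∀ x, h x ≠ 0 → x ∈ U := by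
  obtain ⟨φ, hφ, hφx₀, hφU⟩ := completely_regular_isOpen x₀ U hU hx₀
  refine ⟨⟨fun x => 1 - φ x, by fun_prop⟩, fun x => ?_, by simp [hφx₀], fun x hx => ?_⟩
  · simp [unitInterval.le_one (φ x), unitInterval.nonneg (φ x)]
  · by_contra hxU
    simp [hφU hxU] at hx

lemma range_smul_subset_thickening_segment {X E : Type*} [NormedAddCommGroup E]
    [NormedSpace ℝ E] {g : X → E} {h : X → ℝ} {b : E} {ε : ℝ} (hε : 0 < ε)
    (hh : ∀ x, h x ∈ Icc 0 1) (hg : ∀ x, h x ≠ 0 → dist (g x) b < ε) :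
    range (fun x => h x • g x) ⊆ thickening ε (segment ℝ 0 b) := by
  rintro _ ⟨x, rfl⟩
  rw [mem_thickening_iff]
  by_cases hx : h x = 0
  · exact ⟨0, left_mem_segment ℝ 0 b, by simpa [hx] using hε⟩
  · refine ⟨h x • b, ⟨1 - h x, h x, by linarith [(hh x).2], (hh x).1, by ring, by simp⟩, ?_⟩
    calc dist (h x • g x) (h x • b) = h x * dist (g x) b := by
          rw [dist_smul₀, Real.norm_of_nonneg (hh x).1]
      _ ≤ dist (g x) b := mul_le_of_le_one_left dist_nonneg (hh x).2
      _ < ε := hg x hx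

lemma mem_segment_of_forall_range_smul_eq {X E : Type*} [TopologicalSpace X]
    [CompletelyRegularSpace X] [NormedAddCommGroup E] [NormedSpace ℝ E] {f : X → E}
    {g : C(X, E)}
    (H : ∀ h : C(X, ℝ), (∀ x, 0 ≤ h x) → range (fun x => h x • f x) = range (fun x => h x • g x))
    (x₀ : X) : f x₀ ∈ segment ℝ 0 (g x₀) := by
  rw [← (isClosed_segment _ _).closure_eq, Metric.mem_closure_iff]
  intro ε hε
  obtain ⟨h, hh, hx₀, hU⟩ := CompletelyRegularSpace.exists_bump
    (isOpen_lt (g.continuous.dist continuous_const) continuous_const)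
    (show dist (g x₀) (g x₀) < ε by simpa)
  have hf : f x₀ ∈ range (fun x => h x • f x) := ⟨x₀, by simp [hx₀]⟩
  rw [H h fun x => (hh x).1] at hf
  exact mem_thickening_iff.1 (range_smul_subset_thickening_segment hε hh hU hf)

theorem ContinuousMap.eq_iff_forall_range_smul_eq {X E : Type*} [TopologicalSpace X]
    [CompletelyRegularSpace X] [NormedAddCommGroup E] [NormedSpace ℝ E] {f g : C(X, E)} :
    f = g ↔ ∀ h : C(X, ℝ), (∀ x, 0 ≤ h x) →
      range (fun x => h x • f x) = range (fun x => h x • g x) := by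
  refine ⟨by rintro rfl _ _; rfl, fun H => ext fun x₀ => ?_⟩
  have hfg := mem_segment_of_forall_range_smul_eq H x₀
  have hgf := mem_segment_of_forall_range_smul_eq (fun h hh => (H h hh).symm) x₀
  rw [mem_segment_iff_wbtw] at hfg hgf
  exact (wbtw_swap_right_iff ℝ 0).1 ⟨hfg, hgf⟩

theorem stmt3 {X : Type*} [TopologicalSpace X] [CompactSpace X] [T2Space X]
    (f g : C(X, ℂ)) :
    f = g ↔
      ∀ h : C(X, ℝ), (∀ x, 0 ≤ h x) →
        Set.range (fun x => f x * (h x : ℂ)) =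
          Set.range (fun x => g x * (h x : ℂ)) := by
  simpa only [mul_comm _ (Complex.ofReal _), Complex.real_smul] using
    ContinuousMap.eq_iff_forall_range_smul_eq (f := f) (g := g)
end

section
/- Let X be a compact Hausdorff space, x₀ ∈ X, and f, g ∈ C(X) with f(x₀) ≠ g(x₀) and |f(x₀)| ≤ |g(x₀)|. Then there exists a continuous function h : X → [0,1] with h(x₀) = 1 such that the range of g·h is not contained in the set {t·z : t ∈ [0,1], z ∈ range(f·h)} closure, i.e., range(f·h) ≠ range(g·h). -/
/-!
Let `d = ‖f x₀ - g x₀‖` and take an Urysohn function `h` vanishing wherever `‖f x - f x₀‖ ≥ d / 2`.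
If `g x₀ = f x * h x` for some `x`, then `g x₀` lies on the segment `[0, f x]` and is at least as
long as `f x₀`, which forces `d ≤ 2 ‖f x - f x₀‖ < d` (when `h x = 0`, instead `f x₀ = g x₀ = 0`).
-/

open Set

lemma norm_sub_smul_self_of_mem_Icc {E : Type*} [SeminormedAddCommGroup E] [NormedSpace ℝ E]
    (w : E) {t : ℝ} (ht : t ∈ Icc (0 : ℝ) 1) : ‖w - t • w‖ = ‖w‖ - ‖t • w‖ := by
  rw [show w - t • w = (1 - t) • w by rw [sub_smul, one_smul], norm_smul, norm_smul,
    Real.norm_of_nonneg (sub_nonneg.2 ht.2), Real.norm_of_nonneg ht.1]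
  ring

lemma norm_sub_le_two_mul_norm_sub_of_smul_eq {E : Type*} [SeminormedAddCommGroup E]
    [NormedSpace ℝ E] {a b w : E} {t : ℝ} (ht : t ∈ Icc (0 : ℝ) 1) (hab : ‖a‖ ≤ ‖b‖)
    (hb : t • w = b) : ‖a - b‖ ≤ 2 * ‖w - a‖ := by
  have hwb : ‖w - b‖ = ‖w‖ - ‖b‖ := hb ▸ norm_sub_smul_self_of_mem_Icc w ht
  calc ‖a - b‖ ≤ ‖a - w‖ + ‖w - b‖ := norm_sub_le_norm_sub_add_norm_sub a w b
    _ ≤ ‖w - a‖ + (‖w‖ - ‖a‖) := by rw [norm_sub_rev, hwb]; linarith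
    _ ≤ 2 * ‖w - a‖ := by linarith [norm_sub_norm_le w a]

theorem stmt6 {X : Type*} [TopologicalSpace X] [CompactSpace X] [T2Space X]
    (x₀ : X) (f g : C(X, ℂ)) (hne : f x₀ ≠ g x₀)
    (habs : ‖f x₀‖ ≤ ‖g x₀‖) :
    ∃ h : C(X, ℝ), (∀ x, h x ∈ Set.Icc (0 : ℝ) 1) ∧ h x₀ = 1 ∧
      Set.range (fun x => f x * (h x : ℂ)) ≠
        Set.range (fun x => g x * (h x : ℂ)) := by
  set d := ‖f x₀ - g x₀‖
  have hd : 0 < d := norm_pos_iff.2 (sub_ne_zero.2 hne)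
  set U : Set X := {x | ‖f x - f x₀‖ < d / 2}
  have hU : IsOpen U := isOpen_lt (by fun_prop) continuous_const
  have hx₀U : x₀ ∈ U := by simp [U, hd]
  obtain ⟨h, h_zero, h_one, h_mem⟩ := exists_continuous_zero_one_of_isClosed hU.isClosed_compl
    isClosed_singleton (disjoint_singleton_right.2 (not_not.2 hx₀U))
  refine ⟨h, h_mem, h_one rfl, fun heq => ?_⟩
  obtain ⟨x, hx⟩ : g x₀ ∈ range (fun x => f x * (h x : ℂ)) := heq ▸ ⟨x₀, by simp [h_one rfl]⟩
  have hxU : x ∈ U := by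
    by_contra hxU
    have hg : g x₀ = 0 := by simpa [h_zero hxU] using hx.symm
    exact hne (by rw [hg, ← norm_eq_zero]; simpa [hg] using habs)
  have key : d ≤ 2 * ‖f x - f x₀‖ := norm_sub_le_two_mul_norm_sub_of_smul_eq (h_mem x) habs
    (by rw [← hx, Complex.real_smul, mul_comm])
  linarith [show ‖f x - f x₀‖ < d / 2 from hxU]
end

section
/- Let X be a compact Hausdorff space and φ : C(X) → C(X) a bijection such that range(φ(f)·φ(h)) = range(f·h) for all f, h ∈ C(X). If f, g ∈ C(X) satisfy φ(f) = φ(g), then f = g; that is, any surjection with this multiplicative range-preserving property is automatically injective. -/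
open Set

private lemma key_abs {a b : ℂ}
    (h : ∀ ε > (0:ℝ), ∃ t : ℝ, 0 ≤ t ∧ t ≤ 1 ∧ ∃ c : ℂ, ‖c - b‖ < ε ∧ a = t * c) :
    ‖a‖ ≤ ‖b‖ := by
  refine le_of_forall_pos_le_add fun ε hε => ?_
  obtain ⟨t, ht0, ht1, c, hc, hac⟩ := h ε hε
  have ha : ‖a‖ = t * ‖c‖ := by
    rw [hac, norm_mul, Complex.norm_real, Real.norm_eq_abs, abs_of_nonneg ht0]
  have hcb : ‖c‖ - ‖b‖ ≤ ‖c - b‖ := norm_sub_norm_le c b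
  have hcn : 0 ≤ ‖c‖ := norm_nonneg c
  nlinarith

private lemma key_eq {a b : ℂ}
    (hab : ∀ ε > (0:ℝ), ∃ t : ℝ, 0 ≤ t ∧ t ≤ 1 ∧ ∃ c : ℂ, ‖c - b‖ < ε ∧ a = t * c)
    (hba : ∀ ε > (0:ℝ), ∃ t : ℝ, 0 ≤ t ∧ t ≤ 1 ∧ ∃ c : ℂ, ‖c - a‖ < ε ∧ b = t * c) :
    a = b := by
  have hr : ‖a‖ = ‖b‖ := le_antisymm (key_abs hab) (key_abs hba)
  have hd : ‖a - b‖ ≤ 0 := by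
    refine le_of_forall_pos_le_add fun δ hδ => ?_
    obtain ⟨t, ht0, ht1, c, hc, hac⟩ := hab (δ / 2) (by linarith)
    have ha : ‖a‖ = t * ‖c‖ := by
      rw [hac, norm_mul, Complex.norm_real, Real.norm_eq_abs, abs_of_nonneg ht0]
    have h1 : ‖a - b‖ ≤ ‖a - (t : ℂ) * b‖ + ‖(t : ℂ) * b - b‖ := by
      have := norm_add_le (a - (t : ℂ) * b) ((t : ℂ) * b - b)
      simpa using this
    have h2 : ‖a - (t : ℂ) * b‖ = t * ‖c - b‖ := by
      rw [hac, ← mul_sub, norm_mul, Complex.norm_real, Real.norm_eq_abs, abs_of_nonneg ht0]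
    have h3 : ‖(t : ℂ) * b - b‖ = (1 - t) * ‖b‖ := by
      have : (t : ℂ) * b - b = ((t - 1 : ℝ) : ℂ) * b := by push_cast; ring
      rw [this, norm_mul, Complex.norm_real, Real.norm_eq_abs, abs_of_nonpos (by linarith)]
      ring
    have hcb : ‖c‖ - ‖b‖ ≤ ‖c - b‖ := norm_sub_norm_le c b
    have hcn : 0 ≤ ‖c - b‖ := norm_nonneg _
    -- (1 - t) * ‖b‖ = t * (‖c‖ - ‖b‖) ≤ ‖c - b‖
    have h4 : (1 - t) * ‖b‖ ≤ ‖c - b‖ := by nlinarith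
    nlinarith
  have : a - b = 0 := by
    have := norm_nonneg (a - b)
    have : ‖a - b‖ = 0 := le_antisymm hd this
    exact norm_eq_zero.mp this
  exact sub_eq_zero.mp this

private lemma key_point {X : Type*} [TopologicalSpace X] [CompactSpace X] [T2Space X]
    (f g : C(X, ℂ)) (hr : ∀ h : C(X, ℂ), Set.range ⇑(f * h) = Set.range ⇑(g * h))
    (x0 : X) :
    ∀ ε > (0:ℝ), ∃ t : ℝ, 0 ≤ t ∧ t ≤ 1 ∧ ∃ c : ℂ, ‖c - g x0‖ < ε ∧ f x0 = t * c := by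
  intro ε hε
  set U : Set X := g ⁻¹' Metric.ball (g x0) ε with hU
  have hUopen : IsOpen U := Metric.isOpen_ball.preimage g.continuous
  have hx0U : x0 ∈ U := by simp [hU, hε]
  have hdisj : Disjoint Uᶜ {x0} := by
    simp only [Set.disjoint_singleton_right, Set.mem_compl_iff, not_not]
    exact hx0U
  obtain ⟨k, hk0, hk1, hk01⟩ :=
    exists_continuous_zero_one_of_isClosed hUopen.isClosed_compl isClosed_singleton hdisj
  let h : C(X, ℂ) := ⟨fun x => ((k x : ℝ) : ℂ), by fun_prop⟩
  have hkx0 : k x0 = 1 := hk1 rfl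
  have hmem : f x0 ∈ Set.range ⇑(g * h) := by
    rw [← hr h]
    exact ⟨x0, by simp [h, hkx0]⟩
  obtain ⟨x, hx⟩ := hmem
  by_cases hxU : x ∈ U
  · refine ⟨k x, (hk01 x).1, (hk01 x).2, g x, ?_, ?_⟩
    · have : dist (g x) (g x0) < ε := by simpa [hU, Metric.mem_ball] using hxU
      simpa [dist_eq_norm] using this
    · rw [← hx]; simp [h]; ring
  · have hkx : k x = 0 := hk0 hxU
    have hf0 : f x0 = 0 := by rw [← hx]; simp [h, hkx]
    exact ⟨0, le_refl 0, zero_le_one, g x0, by simpa using hε, by simp [hf0]⟩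

theorem stmt13 {X : Type*} [TopologicalSpace X] [CompactSpace X] [T2Space X]
    (φ : C(X, ℂ) → C(X, ℂ)) (hsurj : Function.Surjective φ)
    (hrange : ∀ f h : C(X, ℂ),
      Set.range ⇑(φ f * φ h) = Set.range ⇑(f * h)) :
    ∀ f g : C(X, ℂ), φ f = φ g → f = g := by
  intro f g hfg
  have hr : ∀ h : C(X, ℂ), Set.range ⇑(f * h) = Set.range ⇑(g * h) := by
    intro h
    rw [← hrange f h, hfg, hrange g h]
  ext x0
  exact key_eq (key_point f g hr x0) (key_point g f (fun h => (hr h).symm) x0)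
end

section
/- Let X be a first countable compact Hausdorff space. If φ : C(X) → C(X) is a surjective function satisfying range(conj(φ(f))·φ(g)) = range(conj(f)·g) for all f, g ∈ C(X), then there exist a homeomorphism ψ : X → X and a continuous function τ : X → ℂ with |τ| ≡ 1 such that φ(f)(x) = τ(x)·f(ψ(x)) for all x ∈ X, f ∈ C(X). -/
/-!
Normalizing by the unimodular function `conj (φ 1)` yields a bijection `e` with `e 1 = 1`, so
`range (e g) = range g`. A peak function `h` at `x` (real values in `[0, 1]`, equal to `1` only
at `x`) is sent to a peak function at a point `σ x` that does not depend on `h`: two points where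
`e h = 1` would be separated by a Urysohn function `k`, and pulling `k` and `1 - k` back through
`e` produces the value `1` in `range (conj k * (1 - k))`. Since `e (h ^ n) (σ x) = 1`,
`conj (e f (σ x))` lies in `range (conj f * h ^ n)` for all `n`; as `n → ∞` the powers `h ^ n`
concentrate at `x`, so `e f (σ x) = t * f x` with `t ∈ [0, 1]`, and the same argument for
`e.symm` forces `t = 1`. Thus `g ∘ σ = e.symm g` is continuous for every `g`, which makes `σ`
continuous.
-/

open Set Filter Topology ComplexConjugate

lemma continuous_of_forall_continuous_comp {Y Z : Type*} [TopologicalSpace Y]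
    [TopologicalSpace Z] [CompletelyRegularSpace Z] {σ : Y → Z}
    (h : ∀ g : C(Z, ℝ), Continuous (g ∘ σ)) : Continuous σ := by
  refine continuous_iff_continuousAt.2 fun y => ?_
  refine (nhds_basis_opens (σ y)).tendsto_right_iff.2 fun U ⟨hyU, hU⟩ => ?_
  obtain ⟨g, hg, hgy, hgU⟩ := CompletelyRegularSpace.completely_regular_isOpen _ U hU hyU
  have hgσ : ContinuousAt (fun z => (g (σ z) : ℝ)) y :=
    (h ⟨fun z => g z, by fun_prop⟩).continuousAt
  filter_upwards [hgσ.eventually_lt (continuousAt_const (y := (1 : ℝ))) (by simp [hgy])]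
    with z hz
  by_contra hzU
  simp [hgU hzU] at hz

namespace Complex

lemma eq_one_of_ofReal_mul_eq_one {t : ℝ} (ht : t ∈ Icc (0 : ℝ) 1) {b : ℂ} (hb : ‖b‖ ≤ 1)
    (h : (t : ℂ) * b = 1) : t = 1 ∧ b = 1 := by
  have hnorm : t * ‖b‖ = 1 := by
    simpa [norm_mul, abs_of_nonneg ht.1] using congrArg norm h
  have ht1 : t = 1 := by nlinarith [ht.2, mul_le_of_le_one_right ht.1 hb]
  exact ⟨ht1, by simpa [ht1] using h⟩

lemma eq_of_eq_ofReal_mul_of_eq_ofReal_mul {a b : ℂ} {s t : ℝ} (hs : s ∈ Icc (0 : ℝ) 1)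
    (ht : t ∈ Icc (0 : ℝ) 1) (hab : a = t * b) (hba : b = s * a) : a = b := by
  rcases eq_or_ne b 0 with rfl | hb
  · simpa using hab
  have hst : ((s * t : ℝ) : ℂ) = 1 :=
    mul_right_cancel₀ hb (by rw [one_mul, ofReal_mul, mul_assoc, ← hab, ← hba])
  have ht1 : t = 1 := by nlinarith [hs.1, hs.2, ht.1, ht.2, (ofReal_eq_one.1 hst)]
  simpa [ht1] using hab

end Complex

def IsPeak {X : Type*} [TopologicalSpace X] (h : C(X, ℂ)) (x : X) : Prop :=
  range h ⊆ Complex.ofReal '' Icc 0 1 ∧ h ⁻¹' {1} = {x}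

namespace IsPeak

variable {X : Type*} [TopologicalSpace X] {h : C(X, ℂ)} {x : X}

lemma apply_mem (hh : IsPeak h x) (y : X) : h y ∈ Complex.ofReal '' Icc 0 1 :=
  hh.1 (mem_range_self y)

lemma apply_self (hh : IsPeak h x) : h x = 1 := (hh.2.symm.subset rfl : x ∈ h ⁻¹' {1})

lemma eq_of_apply_eq_one (hh : IsPeak h x) {y : X} (hy : h y = 1) : y = x :=
  hh.2.subset hy

lemma norm_apply_le_one (hh : IsPeak h x) (y : X) : ‖h y‖ ≤ 1 := by
  obtain ⟨t, ht, hty⟩ := hh.apply_mem y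
  rw [← hty, Complex.norm_real, Real.norm_of_nonneg ht.1]
  exact ht.2

lemma norm_apply_lt_one (hh : IsPeak h x) {y : X} (hy : y ≠ x) : ‖h y‖ < 1 := by
  obtain ⟨t, ht, hty⟩ := hh.apply_mem y
  have ht1 : t ≠ 1 := fun ht1 => hy (hh.eq_of_apply_eq_one (by simp [← hty, ht1]))
  rw [← hty, Complex.norm_real, Real.norm_of_nonneg ht.1]
  exact lt_of_le_of_ne ht.2 ht1

lemma pow (hh : IsPeak h x) {n : ℕ} (hn : n ≠ 0) : IsPeak (h ^ n) x := by
  refine ⟨?_, ?_⟩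
  · rintro _ ⟨y, rfl⟩
    obtain ⟨t, ht, hty⟩ := hh.apply_mem y
    exact ⟨t ^ n, ⟨pow_nonneg ht.1 n, pow_le_one₀ ht.1 ht.2⟩, by simp [← hty]⟩
  · ext y
    obtain ⟨t, ht, hty⟩ := hh.apply_mem y
    have : h y ^ n = 1 ↔ h y = 1 := by
      rw [← hty]; exact_mod_cast pow_eq_one_iff_of_nonneg ht.1 hn
    simp [this, ← hh.2]

variable [CompactSpace X]

lemma exists_norm_le_of_notMem (hh : IsPeak h x) {U : Set X} (hU : U ∈ 𝓝 x) :
    ∃ c ∈ Ico (0 : ℝ) 1, ∀ y ∉ U, ‖h y‖ ≤ c := by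
  suffices ∃ c ∈ Ico (0 : ℝ) 1, ∀ y ∈ (interior U)ᶜ, ‖h y‖ ≤ c from
    this.imp fun c ⟨hc, hcU⟩ => ⟨hc, fun y hy => hcU y fun hy' => hy (interior_subset hy')⟩
  rcases (interior U)ᶜ.eq_empty_or_nonempty with hK | hK
  · exact ⟨0, ⟨le_rfl, one_pos⟩, by simp [hK]⟩
  obtain ⟨y₀, hy₀, hmax⟩ := isOpen_interior.isClosed_compl.isCompact.exists_isMaxOn hK
    (continuous_norm.comp h.continuous).continuousOn
  have hy₀x : y₀ ≠ x := fun hy => hy₀ (hy ▸ mem_interior_iff_mem_nhds.2 hU)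
  exact ⟨‖h y₀‖, ⟨norm_nonneg _, hh.norm_apply_lt_one hy₀x⟩, hmax⟩

lemma tendsto_of_forall_mul_pow_eq (hh : IsPeak h x) (F : C(X, ℂ)) {v : ℂ} (hv : v ≠ 0)
    {z : ℕ → X} (hz : ∀ n, F (z n) * h (z n) ^ (n + 1) = v) : Tendsto z atTop (𝓝 x) := by
  refine fun U hU => mem_map.2 ?_
  obtain ⟨c, ⟨hc0, hc1⟩, hcU⟩ := hh.exists_norm_le_of_notMem hU
  have hsmall : Tendsto (fun n => ‖F‖ * c ^ (n + 1)) atTop (𝓝 0) := by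
    simpa using ((tendsto_pow_atTop_nhds_zero_of_lt_one hc0 hc1).comp
      (tendsto_add_atTop_nat 1)).const_mul ‖F‖
  filter_upwards [hsmall.eventually_lt_const (norm_pos_iff.2 hv)] with n hn
  by_contra hzU
  refine hn.not_ge ?_
  calc ‖v‖ = ‖F (z n)‖ * ‖h (z n)‖ ^ (n + 1) := by rw [← hz n, norm_mul, norm_pow]
    _ ≤ ‖F‖ * c ^ (n + 1) := by gcongr; exacts [F.norm_coe_le_norm _, hcU _ hzU]

lemma exists_eq_ofReal_mul (hh : IsPeak h x) (F : C(X, ℂ)) {v : ℂ}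
    (hv : ∀ n, ∃ z, F z * h z ^ (n + 1) = v) : ∃ t ∈ Icc (0 : ℝ) 1, v = t * F x := by
  rcases eq_or_ne v 0 with rfl | hv0
  · exact ⟨0, ⟨le_rfl, zero_le_one⟩, by simp⟩
  choose z hz using hv
  have hzx := hh.tendsto_of_forall_mul_pow_eq F hv0 hz
  have hpow (n : ℕ) : h (z n) ^ (n + 1) ∈ Complex.ofReal '' Icc 0 1 :=
    (hh.pow n.succ_ne_zero).apply_mem (z n)
  obtain ⟨_, ⟨t, ht, rfl⟩, κ, hκ, hlim⟩ :=
    (isCompact_Icc.image Complex.continuous_ofReal).tendsto_subseq hpow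
  have hF : Tendsto (fun n => F (z (κ n)) * h (z (κ n)) ^ (κ n + 1)) atTop (𝓝 (F x * t)) :=
    ((F.continuous.tendsto x).comp (hzx.comp hκ.tendsto_atTop)).mul hlim
  simp only [hz] at hF
  exact ⟨t, ht, by rw [mul_comm]; exact tendsto_nhds_unique tendsto_const_nhds hF⟩

end IsPeak

lemma exists_isPeak {X : Type*} [TopologicalSpace X] [CompactSpace X] [T2Space X]
    [FirstCountableTopology X] (x : X) : ∃ h : C(X, ℂ), IsPeak h x := by
  obtain ⟨f, hf1, -, -, hf⟩ := exists_continuous_one_zero_of_isCompact_of_isGδ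
    isCompact_singleton (IsGδ.singleton x) isClosed_empty (disjoint_empty _)
  refine ⟨⟨fun y => (f y : ℂ), by fun_prop⟩, ?_, ?_⟩
  · rintro _ ⟨y, rfl⟩
    exact ⟨f y, hf y, rfl⟩
  · ext y
    simp [hf1]

lemma eq_of_forall_range_conj_mul_eq {X : Type*} [TopologicalSpace X] [CompactSpace X]
    [T2Space X] [FirstCountableTopology X] {f f' : C(X, ℂ)}
    (h : ∀ g : C(X, ℂ),
      range (fun x => conj (f x) * g x) = range (fun x => conj (f' x) * g x)) :
    f = f' := by
  have hscale {u u' : C(X, ℂ)} (huu' : ∀ g : C(X, ℂ),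
      range (fun x => conj (u x) * g x) = range (fun x => conj (u' x) * g x)) (x : X) :
      ∃ t ∈ Icc (0 : ℝ) 1, conj (u x) = t * conj (u' x) := by
    obtain ⟨h, hh⟩ := exists_isPeak x
    refine hh.exists_eq_ofReal_mul (star u') fun n => ?_
    have hmem : conj (u x) ∈ range (fun y => conj (u y) * (h ^ (n + 1)) y) :=
      ⟨x, by simp [hh.apply_self]⟩
    rw [huu'] at hmem
    simpa using hmem
  ext x
  obtain ⟨t, ht, hft⟩ := hscale h x
  obtain ⟨s, hs, hfs⟩ := hscale (fun g => (h g).symm) x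
  exact (starRingEnd ℂ).injective (Complex.eq_of_eq_ofReal_mul_of_eq_ofReal_mul hs ht hft hfs)

def PreservesRangeConjMul {X : Type*} [TopologicalSpace X] (φ : C(X, ℂ) → C(X, ℂ)) : Prop :=
  ∀ f g : C(X, ℂ), range (fun x => conj (φ f x) * φ g x) = range (fun x => conj (f x) * g x)

namespace PreservesRangeConjMul

variable {X : Type*} [TopologicalSpace X] {φ : C(X, ℂ) → C(X, ℂ)}

lemma injective [CompactSpace X] [T2Space X] [FirstCountableTopology X]
    (hφ : PreservesRangeConjMul φ) : Function.Injective φ := fun f f' hff' =>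
  eq_of_forall_range_conj_mul_eq fun g => by rw [← hφ f g, hff', hφ f' g]

lemma norm_apply_one (hφ : PreservesRangeConjMul φ) (x : X) : ‖φ 1 x‖ = 1 := by
  obtain ⟨y, hy⟩ :
      conj (φ 1 x) * φ 1 x ∈ range (fun y => conj ((1 : C(X, ℂ)) y) * (1 : C(X, ℂ)) y) :=
    hφ 1 1 ▸ mem_range_self x
  rw [Complex.conj_mul'] at hy
  have hsq : ((‖φ 1 x‖ ^ 2 : ℝ) : ℂ) = 1 := by rw [Complex.ofReal_pow, ← hy]; simp
  exact (pow_eq_one_iff_of_nonneg (norm_nonneg _) two_ne_zero).1 (mod_cast hsq)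

lemma mul_left {u : C(X, ℂ)} (hu : ∀ x, ‖u x‖ = 1) (hφ : PreservesRangeConjMul φ) :
    PreservesRangeConjMul (fun f => u * φ f) := fun f g => by
  rw [← hφ f g]
  congr 1
  ext x
  calc conj (u x * φ f x) * (u x * φ g x) = (conj (u x) * u x) * (conj (φ f x) * φ g x) := by
        rw [map_mul]; ring
    _ = conj (φ f x) * φ g x := by rw [Complex.conj_mul', hu x]; simp

lemma symm {e : C(X, ℂ) ≃ C(X, ℂ)} (he : PreservesRangeConjMul e) :
    PreservesRangeConjMul e.symm := fun f g => by
  rw [← he, e.apply_symm_apply, e.apply_symm_apply]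

lemma range_apply (hφ : PreservesRangeConjMul φ) (hφ1 : φ 1 = 1) (g : C(X, ℂ)) :
    range (φ g) = range g := by
  simpa [hφ1] using hφ 1 g

lemma norm_apply_le_one (hφ : PreservesRangeConjMul φ) (hφ1 : φ 1 = 1) {g : C(X, ℂ)}
    (hg : ∀ z, ‖g z‖ ≤ 1) (y : X) : ‖φ g y‖ ≤ 1 := by
  obtain ⟨z, hz⟩ : φ g y ∈ range g := hφ.range_apply hφ1 g ▸ mem_range_self y
  exact hz ▸ hg z

lemma range_apply_subset (hφ : PreservesRangeConjMul φ) (hφ1 : φ 1 = 1) {h : C(X, ℂ)}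
    {x : X} (hh : IsPeak h x) : range (φ h) ⊆ Complex.ofReal '' Icc 0 1 :=
  (hφ.range_apply hφ1 h).trans_subset hh.1

end PreservesRangeConjMul

def SendsPeaksTo {X : Type*} [TopologicalSpace X] (φ : C(X, ℂ) → C(X, ℂ)) (σ : X → X) :
    Prop :=
  ∀ ⦃h : C(X, ℂ)⦄ ⦃x : X⦄, IsPeak h x → φ h (σ x) = 1

namespace PreservesRangeConjMul

variable {X : Type*} [TopologicalSpace X] {e : C(X, ℂ) ≃ C(X, ℂ)}

lemma symm_apply_eq_one (he : PreservesRangeConjMul e) (he1 : e 1 = 1) {h : C(X, ℂ)} {x : X}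
    (hh : IsPeak h x) {k : C(X, ℂ)} (hk : ∀ z, ‖k z‖ ≤ 1) {y : X} (hy : e h y = 1)
    (hky : k y = 1) : e.symm k x = 1 := by
  obtain ⟨z, hz⟩ : (1 : ℂ) ∈ range (fun z => conj (h z) * e.symm k z) := by
    rw [← he]; exact ⟨y, by simp [hy, hky]⟩
  beta_reduce at hz
  obtain ⟨t, ht, htz⟩ := hh.apply_mem z
  rw [← htz, Complex.conj_ofReal] at hz
  have hkz := he.symm.norm_apply_le_one (e.symm_apply_eq.2 he1.symm) hk z
  obtain ⟨ht1, hkz1⟩ := Complex.eq_one_of_ofReal_mul_eq_one ht hkz hz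
  rwa [← hh.eq_of_apply_eq_one (by rw [← htz, ht1, Complex.ofReal_one])]

lemma eq_of_isPeak_apply_eq_one [CompactSpace X] [T2Space X] (he : PreservesRangeConjMul e)
    (he1 : e 1 = 1) {h : C(X, ℂ)} {x : X} (hh : IsPeak h x) {y₁ y₂ : X} (h₁ : e h y₁ = 1)
    (h₂ : e h y₂ = 1) : y₁ = y₂ := by
  by_contra hne
  obtain ⟨k, hk₂, hk₁, hk⟩ := exists_continuous_zero_one_of_isClosed isClosed_singleton
    isClosed_singleton (disjoint_singleton.2 (Ne.symm hne))
  set kc : C(X, ℂ) := ⟨fun z => (k z : ℂ), by fun_prop⟩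
  have hkc (z : X) : ‖kc z‖ ≤ 1 := by
    simpa [kc, abs_of_nonneg (hk z).1] using (hk z).2
  have hkc' (z : X) : ‖(1 - kc) z‖ ≤ 1 := by
    have : (1 - kc) z = ((1 - k z : ℝ) : ℂ) := by simp [kc]
    rw [this, Complex.norm_real, Real.norm_of_nonneg (by linarith [(hk z).2])]
    linarith [(hk z).1]
  have hsymm₁ := he.symm_apply_eq_one he1 hh hkc h₁ (by simp [kc, hk₁ rfl])
  have hsymm₂ := he.symm_apply_eq_one he1 hh hkc' h₂ (by simp [kc, hk₂ rfl])
  obtain ⟨z, hz⟩ : (1 : ℂ) ∈ range (fun z => conj (kc z) * (1 - kc) z) := by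
    rw [← he.symm]; exact ⟨x, by simp [hsymm₁, hsymm₂]⟩
  have hkz : k z * (1 - k z) = 1 := by
    exact_mod_cast (by simpa [kc] using hz : (k z : ℂ) * (1 - k z) = 1)
  nlinarith [sq_nonneg (k z - 1 / 2)]

lemma exists_sendsPeaksTo [CompactSpace X] [T2Space X] [FirstCountableTopology X]
    (he : PreservesRangeConjMul e) (he1 : e 1 = 1) : ∃ σ : X → X, SendsPeaksTo e σ := by
  have (x : X) : ∃ y, ∀ h : C(X, ℂ), IsPeak h x → e h y = 1 := by
    obtain ⟨h₀, hh₀⟩ := exists_isPeak x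
    obtain ⟨y, hy⟩ : (1 : ℂ) ∈ range (e h₀) := by
      rw [he.range_apply he1]; exact ⟨x, hh₀.apply_self⟩
    refine ⟨y, fun h hh => ?_⟩
    obtain ⟨y', hy'⟩ : (1 : ℂ) ∈ range (fun z => conj (e h₀ z) * e h z) := by
      rw [he]; exact ⟨x, by simp [hh₀.apply_self, hh.apply_self]⟩
    beta_reduce at hy'
    obtain ⟨t, ht, htz⟩ := he.range_apply_subset he1 hh₀ (mem_range_self y')
    rw [← htz, Complex.conj_ofReal] at hy'
    obtain ⟨ht1, hy'1⟩ := Complex.eq_one_of_ofReal_mul_eq_one ht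
      (he.norm_apply_le_one he1 hh.norm_apply_le_one y') hy'
    rwa [he.eq_of_isPeak_apply_eq_one he1 hh₀ hy (y₂ := y') (by rw [← htz, ht1]; simp)]
  choose σ hσ using this
  exact ⟨σ, fun h x hh => hσ x h hh⟩

end PreservesRangeConjMul

namespace SendsPeaksTo

variable {X : Type*} [TopologicalSpace X] [CompactSpace X] [T2Space X]
  {e : C(X, ℂ) ≃ C(X, ℂ)} {σ ρ : X → X}

lemma isPeak_apply (hσ : SendsPeaksTo e σ) (he : PreservesRangeConjMul e) (he1 : e 1 = 1)
    {h : C(X, ℂ)} {x : X} (hh : IsPeak h x) : IsPeak (e h) (σ x) := by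
  refine ⟨he.range_apply_subset he1 hh, Set.ext fun y => ⟨fun hy => ?_, fun hy => ?_⟩⟩
  · exact he.eq_of_isPeak_apply_eq_one he1 hh hy (hσ hh)
  · rw [mem_singleton_iff.1 hy]; exact hσ hh

variable [FirstCountableTopology X]

lemma exists_conj_apply_eq_ofReal_mul (hσ : SendsPeaksTo e σ) (he : PreservesRangeConjMul e)
    (f : C(X, ℂ)) (x : X) : ∃ t ∈ Icc (0 : ℝ) 1, conj (e f (σ x)) = t * conj (f x) := by
  obtain ⟨h, hh⟩ := exists_isPeak x
  refine hh.exists_eq_ofReal_mul (star f) fun n => ?_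
  have hmem : conj (e f (σ x)) ∈ range (fun z => conj (e f z) * e (h ^ (n + 1)) z) :=
    ⟨σ x, by simp [hσ (hh.pow n.succ_ne_zero)]⟩
  rw [he] at hmem
  simpa using hmem

lemma leftInverse (hσ : SendsPeaksTo e σ) (hρ : SendsPeaksTo e.symm ρ)
    (he : PreservesRangeConjMul e) (he1 : e 1 = 1) : Function.LeftInverse ρ σ := fun x => by
  obtain ⟨h, hh⟩ := exists_isPeak x
  exact hh.eq_of_apply_eq_one (by simpa using hρ (hσ.isPeak_apply he he1 hh))

lemma apply_apply (hσ : SendsPeaksTo e σ) (hρ : SendsPeaksTo e.symm ρ)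
    (he : PreservesRangeConjMul e) (he1 : e 1 = 1) (f : C(X, ℂ)) (x : X) :
    e f (σ x) = f x := by
  obtain ⟨t, ht, hft⟩ := hσ.exists_conj_apply_eq_ofReal_mul he f x
  obtain ⟨s, hs, hfs⟩ := hρ.exists_conj_apply_eq_ofReal_mul he.symm (e f) (σ x)
  rw [hσ.leftInverse hρ he he1, e.symm_apply_apply] at hfs
  exact (starRingEnd ℂ).injective (Complex.eq_of_eq_ofReal_mul_of_eq_ofReal_mul hs ht hft hfs)

lemma continuous (hσ : SendsPeaksTo e σ) (hρ : SendsPeaksTo e.symm ρ)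
    (he : PreservesRangeConjMul e) (he1 : e 1 = 1) : Continuous σ :=
  continuous_of_forall_continuous_comp fun g => by
    set gc : C(X, ℂ) := ⟨fun z => (g z : ℂ), by fun_prop⟩
    refine (Complex.continuous_re.comp (e.symm gc).continuous).congr fun x => ?_
    simpa [gc] using congrArg Complex.re (hσ.apply_apply hρ he he1 (e.symm gc) x).symm

end SendsPeaksTo

theorem PreservesRangeConjMul.exists_homeomorph_apply_eq {X : Type*} [TopologicalSpace X]
    [CompactSpace X] [T2Space X] [FirstCountableTopology X] {e : C(X, ℂ) ≃ C(X, ℂ)}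
    (he : PreservesRangeConjMul e) (he1 : e 1 = 1) :
    ∃ ψ : X ≃ₜ X, ∀ f x, e f x = f (ψ x) := by
  have he1' : e.symm 1 = 1 := e.symm_apply_eq.2 he1.symm
  obtain ⟨σ, hσ⟩ := he.exists_sendsPeaksTo he1
  obtain ⟨ρ, hρ⟩ := he.symm.exists_sendsPeaksTo he1'
  refine ⟨{ toFun := ρ, invFun := σ
            left_inv := hρ.leftInverse hσ he.symm he1'
            right_inv := hσ.leftInverse hρ he he1
            continuous_toFun := hρ.continuous hσ he.symm he1'
            continuous_invFun := hσ.continuous hρ he he1 }, fun f x => ?_⟩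
  simpa using (hρ.apply_apply hσ he.symm he1' (e f) x).symm

theorem stmt15 {X : Type*} [TopologicalSpace X] [CompactSpace X] [T2Space X]
    [FirstCountableTopology X]
    (φ : C(X, ℂ) → C(X, ℂ)) (hsurj : Function.Surjective φ)
    (hrange : ∀ f g : C(X, ℂ),
      Set.range (fun x => (starRingEnd ℂ) (φ f x) * φ g x) =
        Set.range (fun x => (starRingEnd ℂ) (f x) * g x)) :
    ∃ (ψ : X ≃ₜ X) (τ : C(X, ℂ)),
      (∀ x, ‖τ x‖ = 1) ∧
      ∀ (f : C(X, ℂ)) (x : X), φ f x = τ x * f (ψ x) := by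
  set w := φ 1
  have hw : ∀ x, ‖w x‖ = 1 := PreservesRangeConjMul.norm_apply_one hrange
  have hw_mul_conj (x : X) : w x * conj (w x) = 1 := by simp [Complex.mul_conj', hw x]
  have hnormalized : PreservesRangeConjMul (fun f => star w * φ f) :=
    PreservesRangeConjMul.mul_left (by simpa using hw) hrange
  have hsurj' : Function.Surjective (fun f => star w * φ f) := fun g =>
    (hsurj (w * g)).imp fun f hf => by
      ext x; simp [hf, ← mul_assoc, mul_comm _ (w x), hw_mul_conj]
  let e := Equiv.ofBijective _ ⟨hnormalized.injective, hsurj'⟩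
  have he (f : C(X, ℂ)) (x : X) : e f x = conj (w x) * φ f x := rfl
  have he1 : e 1 = 1 := by ext x; simp [he, mul_comm _ (w x), hw_mul_conj, w]
  obtain ⟨ψ, hψ⟩ := PreservesRangeConjMul.exists_homeomorph_apply_eq (e := e) hnormalized he1
  refine ⟨ψ, w, hw, fun f x => ?_⟩
  rw [← hψ f x, he, ← mul_assoc, hw_mul_conj, one_mul]
end

section
/- Let X be a first countable compact Hausdorff space and φ : C(X) → C(X) a surjective function with range(φ(f)φ(g)) = range(fg) for all f, g ∈ C(X) and φ(1) = 1. Then φ is homogeneous: φ(λf) = λφ(f) for every λ ∈ ℂ and f ∈ C(X). -/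
open Filter Topology

/-- If `range (u*k) = range (v*k)` for all `k` and `u x₀ ≠ 0`, then
`u x₀ = t * v x₀` for some `t ∈ [0,1]`. -/
lemma seg_aux {X : Type*} [TopologicalSpace X] [CompactSpace X] [T2Space X]
    [FirstCountableTopology X] (u v : C(X, ℂ))
    (h : ∀ k : C(X, ℂ), Set.range ⇑(u * k) = Set.range ⇑(v * k))
    (x₀ : X) (hu : u x₀ ≠ 0) :
    ∃ t : ℝ, t ∈ Set.Icc (0:ℝ) 1 ∧ u x₀ = (t : ℂ) * v x₀ := by
  obtain ⟨U, hU⟩ := (𝓝 x₀).exists_antitone_basis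
  -- open sets inside the basis
  have hO : ∀ n : ℕ, ∃ O : Set X, O ⊆ U n ∧ IsOpen O ∧ x₀ ∈ O := by
    intro n
    exact mem_nhds_iff.mp (hU.mem n)
  choose O hOsub hOopen hOmem using hO
  -- Urysohn functions
  have hf : ∀ n : ℕ, ∃ f : C(X, ℝ), Set.EqOn f 0 (O n)ᶜ ∧ Set.EqOn f 1 {x₀} ∧
      ∀ x, f x ∈ Set.Icc (0:ℝ) 1 := by
    intro n
    exact exists_continuous_zero_one_of_isClosed (hOopen n).isClosed_compl
      isClosed_singleton (Set.disjoint_singleton_right.mpr fun hc => hc (hOmem n))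
  choose f hf0 hf1 hf01 using hf
  -- complexified bumps
  set k : ℕ → C(X, ℂ) := fun n => ⟨fun x => ((f n x : ℝ) : ℂ),
    Complex.continuous_ofReal.comp (f n).continuous⟩ with hk
  -- u x₀ ∈ range (u * k n) = range (v * k n)
  have hx : ∀ n : ℕ, ∃ x : X, v x * ((f n x : ℝ) : ℂ) = u x₀ := by
    intro n
    have h1 : u x₀ ∈ Set.range ⇑(u * k n) := by
      refine ⟨x₀, ?_⟩
      have : f n x₀ = 1 := hf1 n rfl
      simp [hk, this]
    rw [h (k n)] at h1
    obtain ⟨x, hx⟩ := h1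
    exact ⟨x, by simpa [hk] using hx⟩
  choose x hx using hx
  -- each x n is in O n ⊆ U n
  have hxU : ∀ n, x n ∈ U n := by
    intro n
    by_contra hc
    have hxO : x n ∈ (O n)ᶜ := fun hmem => hc (hOsub n hmem)
    have hz : f n (x n) = 0 := hf0 n hxO
    have h2 := hx n
    rw [hz] at h2
    simp at h2
    exact hu h2.symm
  -- x n → x₀
  have hxt : Tendsto x atTop (𝓝 x₀) := hU.tendsto hxU
  have hvt : Tendsto (fun n => v (x n)) atTop (𝓝 (v x₀)) :=
    (v.continuous.tendsto x₀).comp hxt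
  -- the sequence a n := f n (x n) • v x₀ converges to u x₀
  have key : Tendsto (fun n => ((f n (x n) : ℝ) : ℂ) * v x₀) atTop (𝓝 (u x₀)) := by
    rw [tendsto_iff_norm_sub_tendsto_zero]
    have hbound : ∀ n, ‖((f n (x n) : ℝ) : ℂ) * v x₀ - u x₀‖ ≤ ‖v x₀ - v (x n)‖ := by
      intro n
      have : ((f n (x n) : ℝ) : ℂ) * v x₀ - u x₀
          = ((f n (x n) : ℝ) : ℂ) * (v x₀ - v (x n)) := by
        rw [← hx n]; ring
      rw [this, norm_mul]
      have h1 : ‖((f n (x n) : ℝ) : ℂ)‖ ≤ 1 := by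
        rw [Complex.norm_real]
        have := hf01 n (x n)
        rw [Real.norm_eq_abs, abs_le]
        constructor <;> linarith [this.1, this.2]
      calc ‖((f n (x n) : ℝ) : ℂ)‖ * ‖v x₀ - v (x n)‖
          ≤ 1 * ‖v x₀ - v (x n)‖ := by
            exact mul_le_mul_of_nonneg_right h1 (norm_nonneg _)
        _ = ‖v x₀ - v (x n)‖ := one_mul _
    have hz : Tendsto (fun n => ‖v x₀ - v (x n)‖) atTop (𝓝 0) := by
      have : Tendsto (fun n => v x₀ - v (x n)) atTop (𝓝 (v x₀ - v x₀)) :=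
        tendsto_const_nhds.sub hvt
      simpa using this.norm
    exact squeeze_zero (fun n => norm_nonneg _) hbound hz
  -- the limit lies in the closed set {t * v x₀ : t ∈ [0,1]}
  have hS : IsClosed ((fun t : ℝ => (t : ℂ) * v x₀) '' Set.Icc 0 1) :=
    (isCompact_Icc.image (by continuity)).isClosed
  have hmem : u x₀ ∈ (fun t : ℝ => (t : ℂ) * v x₀) '' Set.Icc 0 1 := by
    refine hS.mem_of_tendsto key (Eventually.of_forall fun n => ?_)
    exact ⟨f n (x n), hf01 n (x n), rfl⟩
  obtain ⟨t, ht, htv⟩ := hmem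
  exact ⟨t, ht, htv.symm⟩

/-- Separation lemma: if `range (u*k) = range (v*k)` for all `k` then `u = v`. -/
lemma sep_lemma {X : Type*} [TopologicalSpace X] [CompactSpace X] [T2Space X]
    [FirstCountableTopology X] (u v : C(X, ℂ))
    (h : ∀ k : C(X, ℂ), Set.range ⇑(u * k) = Set.range ⇑(v * k)) : u = v := by
  have h' : ∀ k : C(X, ℂ), Set.range ⇑(v * k) = Set.range ⇑(u * k) :=
    fun k => (h k).symm
  ext x
  by_cases hu : u x = 0
  · by_cases hv : v x = 0
    · rw [hu, hv]
    · obtain ⟨s, hs, hsv⟩ := seg_aux v u h' x hv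
      rw [hu, mul_zero] at hsv
      exact absurd hsv hv
  · obtain ⟨t, ht, htv⟩ := seg_aux u v h x hu
    by_cases hv : v x = 0
    · rw [hv, mul_zero] at htv
      exact absurd htv hu
    · obtain ⟨s, hs, hsv⟩ := seg_aux v u h' x hv
      -- u x = t * v x, v x = s * u x ⇒ u x = (t*s) * u x
      have hts : ((t * s : ℝ) : ℂ) = 1 := by
        have : u x = ((t * s : ℝ) : ℂ) * u x := by
          conv_lhs => rw [htv, hsv]
          push_cast; ring
        have h2 : (1 - ((t * s : ℝ) : ℂ)) * u x = 0 := by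
          rw [sub_mul, one_mul, ← this, sub_self]
        rcases mul_eq_zero.mp h2 with h3 | h3
        · have : ((t * s : ℝ) : ℂ) = 1 := by linear_combination -h3
          exact this
        · exact absurd h3 hu
      have htsr : t * s = 1 := by exact_mod_cast hts
      have ht1 : t = 1 := by nlinarith [ht.1, ht.2, hs.1, hs.2]
      rw [htv, ht1]; simp

theorem stmt16 {X : Type*} [TopologicalSpace X] [CompactSpace X] [T2Space X]
    [FirstCountableTopology X]
    (φ : C(X, ℂ) → C(X, ℂ)) (hsurj : Function.Surjective φ)
    (hrange : ∀ f g : C(X, ℂ),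
      Set.range ⇑(φ f * φ g) = Set.range ⇑(f * g))
    (hone : φ 1 = 1) :
    ∀ (c : ℂ) (f : C(X, ℂ)), φ (c • f) = c • φ f := by
  intro c f
  apply sep_lemma
  intro k
  obtain ⟨h, rfl⟩ := hsurj k
  have e1 : Set.range ⇑(φ (c • f) * φ h) = Set.range ⇑((c • f) * h) := hrange _ _
  have e2 : Set.range ⇑(φ f * φ h) = Set.range ⇑(f * h) := hrange f h
  have smul_range : ∀ w : C(X, ℂ), Set.range ⇑(c • w) = (fun z => c * z) '' Set.range ⇑w := by
    intro w
    ext z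
    simp only [Set.mem_range, Set.mem_image, ContinuousMap.coe_smul, Pi.smul_apply,
      smul_eq_mul]
    constructor
    · rintro ⟨y, hy⟩; exact ⟨w y, ⟨y, rfl⟩, hy⟩
    · rintro ⟨_, ⟨y, rfl⟩, hy⟩; exact ⟨y, hy⟩
  calc Set.range ⇑(φ (c • f) * φ h)
      = Set.range ⇑((c • f) * h) := e1
    _ = Set.range ⇑(c • (f * h)) := by rw [smul_mul_assoc]
    _ = (fun z => c * z) '' Set.range ⇑(f * h) := smul_range _
    _ = (fun z => c * z) '' Set.range ⇑(φ f * φ h) := by rw [e2]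
    _ = Set.range ⇑(c • (φ f * φ h)) := (smul_range _).symm
    _ = Set.range ⇑((c • φ f) * φ h) := by rw [smul_mul_assoc]
end

section
/- Let X be a complex Banach space and T : X → X, S : X* → X* bijective linear maps such that (Sf)(Tx) = λ f(x) for all x ∈ X, f ∈ X* and some fixed nonzero scalar λ. Then T and S are bounded, and S = λ (T*)⁻¹ where T* is the Banach-space adjoint of T. -/
/-!
Since `X*` separates the points of `X` and `S` is onto `X*`, the relation `(Sf)(Tx) = λ f(x)`
pins down `T x` as the unique `y` with `(Sf)(y) = λ f(x)` for all `f`. This exhibits the graph of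
`T` as an intersection of closed sets, so `T` is bounded by the closed graph theorem, hence a
topological isomorphism by the open mapping theorem. Evaluating the relation at `x = T⁻¹ y`
gives `S f = λ • f ∘ T⁻¹`, which is visibly bounded in `f`.
-/

open Function

theorem LinearMap.isClosed_graph_of_dual_apply_eq {R E F : Type*} [CommRing R]
    [TopologicalSpace R] [IsTopologicalRing R] [T2Space R]
    [AddCommGroup E] [Module R E] [TopologicalSpace E]
    [AddCommGroup F] [Module R F] [TopologicalSpace F] [SeparatingDual R F]
    {T : E →ₗ[R] F} {S : StrongDual R E → StrongDual R F} (hS : Surjective S) {c : R}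
    (h : ∀ x f, S f (T x) = c * f x) :
    IsClosed (T.graph : Set (E × F)) := by
  have hgraph : (T.graph : Set (E × F)) = ⋂ f, {p : E × F | S f p.2 = c * f p.1} := by
    ext ⟨x, y⟩
    simp only [SetLike.mem_coe, LinearMap.mem_graph_iff, Set.mem_iInter, Set.mem_ofPred_eq]
    refine ⟨fun hy f => hy ▸ h x f, fun hxy => ?_⟩
    refine (SeparatingDual.eq_iff_forall_dual_eq (R := R)).2 fun g => ?_
    obtain ⟨f, rfl⟩ := hS g
    rw [hxy f, h x f]
  rw [hgraph]
  exact isClosed_iInter fun f =>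
    isClosed_eq ((S f).continuous.comp continuous_snd)
      (continuous_const.mul (f.continuous.comp continuous_fst))

theorem ContinuousLinearEquiv.dual_apply_eq_smul_comp_symm {R E F : Type*} [CommSemiring R]
    [TopologicalSpace R] [ContinuousMul R]
    [AddCommMonoid E] [Module R E] [TopologicalSpace E]
    [AddCommMonoid F] [Module R F] [TopologicalSpace F]
    (e : E ≃L[R] F) {S : StrongDual R E → StrongDual R F} {c : R}
    (h : ∀ x f, S f (e x) = c * f x) (f : StrongDual R E) :
    S f = c • f.comp (e.symm : F →L[R] E) := by
  ext y
  simpa using h (e.symm y) f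

theorem stmt19_general {X : Type*} [NormedAddCommGroup X] [NormedSpace ℂ X]
    [CompleteSpace X]
    (T : X →ₗ[ℂ] X) (S : (X →L[ℂ] ℂ) →ₗ[ℂ] (X →L[ℂ] ℂ))
    (hT : Function.Bijective T) (hS : Function.Bijective S)
    (lam : ℂ)
    (h : ∀ (x : X) (f : X →L[ℂ] ℂ), S f (T x) = lam * f x) :
    Continuous T ∧ Continuous S ∧
      ∃ T' : X ≃L[ℂ] X, (∀ x, T' x = T x) ∧
        ∀ f : X →L[ℂ] ℂ, S f = lam • f.comp (T'.symm : X →L[ℂ] X) := by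
  have hTc : Continuous T :=
    T.continuous_of_isClosed_graph (T.isClosed_graph_of_dual_apply_eq hS.surjective h)
  let T' : X ≃L[ℂ] X := (LinearEquiv.ofBijective T hT).toContinuousLinearEquivOfContinuous hTc
  have hS_eq : ∀ f, S f = lam • f.comp (T'.symm : X →L[ℂ] X) :=
    T'.dual_apply_eq_smul_comp_symm h
  have hSc : Continuous S := by
    rw [show ⇑S = fun f => lam • f.comp (T'.symm : X →L[ℂ] X) from funext hS_eq]
    fun_prop
  exact ⟨hTc, hSc, T', fun _ => rfl, hS_eq⟩

theorem stmt19 {X : Type*} [NormedAddCommGroup X] [NormedSpace ℂ X]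
    [CompleteSpace X]
    (T : X →ₗ[ℂ] X) (S : (X →L[ℂ] ℂ) →ₗ[ℂ] (X →L[ℂ] ℂ))
    (hT : Function.Bijective T) (hS : Function.Bijective S)
    (lam : ℂ) (hlam : lam ≠ 0)
    (h : ∀ (x : X) (f : X →L[ℂ] ℂ), S f (T x) = lam * f x) :
    Continuous T ∧ Continuous S ∧
      ∃ T' : X ≃L[ℂ] X, (∀ x, T' x = T x) ∧
        ∀ f : X →L[ℂ] ℂ, S f = lam • f.comp (T'.symm : X →L[ℂ] X) :=
  stmt19_general T S hT hS lam h
end
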